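/- arXiv:1106.1307 — 2 statements merged into one kernel-verified Lean document; each statement's English description precedes it below -/
import Mathlib

section
/- Define the 2N×2N block matrix polynomials R_n(z) with blocks R_n(z)_{11} = κ_n^{-1}·P_n(z), R_n(z)_{12} = (2πi·κ_n)^{-1}·Q_n(z), R_n(z)_{21} = −2πi·κ_{n-1}*·P_{n-1}(z), R_n(z)_{22} = −κ_{n-1}*·Q_{n-1}(z), and r_n(z) with blocks r_n(z)_{11} = −Q_{n-1}*(z)·κ_{n-1}, r_n(z)_{12} = −(2πi)^{-1}·Q_n*(z)·κ_n^{-*}, r_n(z)_{21} = 2πi·P_{n-1}*(z)·κ_{n-1}, r_n(z)_{22} = P_n*(z)·κ_n^{-*}. Then for every n ≥ 1 and every z ∈ ℂ, R_n(z)·r_n(z) = r_n(z)·R_n(z) = I_{2N}. -/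
open MeasureTheory Matrix Complex Finset
open scoped ComplexOrder

/-- Entrywise integral of a matrix-valued function over an interval `(a, b)`. -/
noncomputable def mint {N : ℕ} (a b : ℝ) (F : ℝ → Matrix (Fin N) (Fin N) ℂ) :
    Matrix (Fin N) (Fin N) ℂ :=
  Matrix.of fun i j => ∫ x in a..b, F x i j


noncomputable def Bmat {N : ℕ} (a b : ℝ) (W : ℝ → Matrix (Fin N) (Fin N) ℂ) (m : ℕ) :
    Matrix (Fin N) (Fin N) ℂ :=
  Matrix.of fun k l => ∫ x in a..b, (x:ℂ)^m * W x k l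

/-- coefficients of the divided difference polynomial -/
noncomputable def sS {N : ℕ} (c : ℕ → Matrix (Fin N) (Fin N) ℂ) (d : ℕ) (z : ℂ) (i : ℕ) :
    Matrix (Fin N) (Fin N) ℂ :=
  ∑ j ∈ Finset.range (d+1), (if i < j then z^(j-1-i) else (0:ℂ)) • c j

noncomputable def pE {N : ℕ} (c : ℕ → Matrix (Fin N) (Fin N) ℂ) (d : ℕ) (z : ℂ) :
    Matrix (Fin N) (Fin N) ℂ :=
  ∑ j ∈ Finset.range (d+1), z^j • c j

noncomputable def qE {N : ℕ} (c : ℕ → Matrix (Fin N) (Fin N) ℂ)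
    (Bm : ℕ → Matrix (Fin N) (Fin N) ℂ) (d : ℕ) (z : ℂ) : Matrix (Fin N) (Fin N) ℂ :=
  ∑ i ∈ Finset.range d, sS c d z i * Bm i

noncomputable def qS {N : ℕ} (c : ℕ → Matrix (Fin N) (Fin N) ℂ)
    (Bm : ℕ → Matrix (Fin N) (Fin N) ℂ) (d : ℕ) (z : ℂ) : Matrix (Fin N) (Fin N) ℂ :=
  ∑ i ∈ Finset.range d, Bm i * sS c d z i

lemma mint_congr_ae {N : ℕ} {a b : ℝ} (hab : a < b)
    {F G : ℝ → Matrix (Fin N) (Fin N) ℂ}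
    (h : ∀ᵐ x : ℝ, x ∈ Set.Ioo a b → F x = G x) : mint a b F = mint a b G := by
  have hb : ∀ᵐ x : ℝ, x ≠ b := by
    have : ({x : ℝ | ¬ x ≠ b} : Set ℝ) = {b} := by ext x; simp
    rw [ae_iff, this, Real.volume_singleton]
  ext i j
  show (∫ x in a..b, F x i j) = ∫ x in a..b, G x i j
  apply intervalIntegral.integral_congr_ae
  filter_upwards [h, hb] with x hFG hxb hmem
  rw [Set.uIoc_of_le hab.le] at hmem
  have : x ∈ Set.Ioo a b := ⟨hmem.1, lt_of_le_of_ne hmem.2 hxb⟩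
  rw [hFG this]

lemma ae_ne_ofReal (z : ℂ) : ∀ᵐ x : ℝ, (x:ℂ) ≠ z := by
  rw [MeasureTheory.ae_iff]
  refine MeasureTheory.measure_mono_null (fun x hx => ?_) (Real.volume_singleton (a := z.re))
  simp only [Set.mem_setOf_eq, not_not] at hx
  simp [Set.mem_singleton_iff, ← hx]

lemma basic_int {N : ℕ} {a b : ℝ} (hab : a < b)
    {W : ℝ → Matrix (Fin N) (Fin N) ℂ}
    (hWcont : ContinuousOn W (Set.Ioo a b))
    (hWmom : ∀ (n : ℕ) (i j : Fin N),
      IntegrableOn (fun x : ℝ => |x| ^ n * ‖W x i j‖) (Set.Ioo a b))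
    (m : ℕ) (k l : Fin N) :
    IntervalIntegrable (fun x : ℝ => (x:ℂ)^m * W x k l) volume a b := by
  rw [intervalIntegrable_iff, Set.uIoc_of_le hab.le]
  have hcont : ContinuousOn (fun x : ℝ => (x:ℂ)^m * W x k l) (Set.Ioo a b) := by
    apply ContinuousOn.mul
    · exact (Continuous.pow (Complex.continuous_ofReal) m).continuousOn
    · exact (continuous_apply l).comp_continuousOn ((continuous_apply k).comp_continuousOn hWcont)
  have h : IntegrableOn (fun x : ℝ => (x:ℂ)^m * W x k l) (Set.Ioo a b) := by
    refine Integrable.mono' (hWmom m k l) (hcont.aestronglyMeasurable measurableSet_Ioo) ?_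
    filter_upwards with x
    simp [abs_pow]
  unfold IntegrableOn at h ⊢
  rwa [Measure.restrict_congr_set Ioo_ae_eq_Ioc] at h

lemma sum_reorder4 {M ι₁ ι₂ ι₃ ι₄ : Type*} [AddCommMonoid M]
    (s1 : Finset ι₁) (s2 : Finset ι₂) (s3 : Finset ι₃) (s4 : Finset ι₄)
    (f : ι₁ → ι₂ → ι₃ → ι₄ → M) :
    ∑ k ∈ s4, ∑ q ∈ s2, ∑ p ∈ s1, ∑ l ∈ s3, f p q l k
      = ∑ p ∈ s1, ∑ q ∈ s2, ∑ l ∈ s3, ∑ k ∈ s4, f p q l k :=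
  calc ∑ k ∈ s4, ∑ q ∈ s2, ∑ p ∈ s1, ∑ l ∈ s3, f p q l k
      = ∑ q ∈ s2, ∑ k ∈ s4, ∑ p ∈ s1, ∑ l ∈ s3, f p q l k := Finset.sum_comm
    _ = ∑ q ∈ s2, ∑ p ∈ s1, ∑ k ∈ s4, ∑ l ∈ s3, f p q l k :=
        Finset.sum_congr rfl fun _ _ => Finset.sum_comm
    _ = ∑ p ∈ s1, ∑ q ∈ s2, ∑ k ∈ s4, ∑ l ∈ s3, f p q l k := Finset.sum_comm
    _ = ∑ p ∈ s1, ∑ q ∈ s2, ∑ l ∈ s3, ∑ k ∈ s4, f p q l k :=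
        Finset.sum_congr rfl fun _ _ => Finset.sum_congr rfl fun _ _ => Finset.sum_comm

lemma entry_expand {N : ℕ} (W : ℝ → Matrix (Fin N) (Fin N) ℂ)
    (dL dR sL sR : ℕ) (cL cR : ℕ → Matrix (Fin N) (Fin N) ℂ) (i j : Fin N) (x : ℝ) :
    ((∑ p ∈ Finset.range dL, ((x:ℂ)^(p+sL)) • cL p) * W x *
        (∑ q ∈ Finset.range dR, ((x:ℂ)^(q+sR)) • cR q)) i j
    = ∑ p ∈ Finset.range dL, ∑ q ∈ Finset.range dR, ∑ l : Fin N, ∑ k : Fin N,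
        (cL p i l * cR q k j) * ((x:ℂ)^(p + sL + (q + sR)) * W x l k) := by
  rw [← sum_reorder4]
  simp only [Matrix.mul_apply, Matrix.sum_apply, Matrix.smul_apply, smul_eq_mul,
    Finset.sum_mul, Finset.mul_sum, pow_add]
  apply Finset.sum_congr rfl; intro k _
  apply Finset.sum_congr rfl; intro q _
  apply Finset.sum_congr rfl; intro p _
  apply Finset.sum_congr rfl; intro l _
  ring

lemma II_sum' {ι : Type*} {a b : ℝ} {μ : MeasureTheory.Measure ℝ} (s : Finset ι) (f : ι → ℝ → ℂ)
    (h : ∀ i ∈ s, IntervalIntegrable (f i) μ a b) :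
    IntervalIntegrable (fun x => ∑ i ∈ s, f i x) μ a b := by
  have := IntervalIntegrable.sum s h
  rwa [Finset.sum_fn] at this

lemma polyW_int {N : ℕ} {a b : ℝ} {W : ℝ → Matrix (Fin N) (Fin N) ℂ}
    (bi : ∀ (m : ℕ) (k l : Fin N),
      IntervalIntegrable (fun x : ℝ => (x:ℂ)^m * W x k l) volume a b)
    (dL dR sL sR : ℕ) (cL cR : ℕ → Matrix (Fin N) (Fin N) ℂ) (i j : Fin N) :
    IntervalIntegrable (fun x : ℝ => ((∑ p ∈ Finset.range dL, ((x:ℂ)^(p+sL)) • cL p) * W x *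
        (∑ q ∈ Finset.range dR, ((x:ℂ)^(q+sR)) • cR q)) i j) volume a b := by
  have hrw : (fun x : ℝ => ((∑ p ∈ Finset.range dL, ((x:ℂ)^(p+sL)) • cL p) * W x *
        (∑ q ∈ Finset.range dR, ((x:ℂ)^(q+sR)) • cR q)) i j)
      = fun x : ℝ => ∑ p ∈ Finset.range dL, ∑ q ∈ Finset.range dR, ∑ l : Fin N, ∑ k : Fin N,
        (cL p i l * cR q k j) * ((x:ℂ)^(p + sL + (q + sR)) * W x l k) :=
    funext (entry_expand W dL dR sL sR cL cR i j)
  rw [hrw]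
  exact II_sum' _ _ (fun p _ => II_sum' _ _ (fun q _ => II_sum' _ _
    (fun l _ => II_sum' _ _ (fun k _ => (bi _ l k).const_mul _))))

set_option maxHeartbeats 1000000 in
lemma integral_sum4 {N : ℕ} {a b : ℝ} {W : ℝ → Matrix (Fin N) (Fin N) ℂ}
    (bi : ∀ (m : ℕ) (k l : Fin N),
      IntervalIntegrable (fun x : ℝ => (x:ℂ)^m * W x k l) volume a b)
    (s1 s2 : Finset ℕ) (c : ℕ → ℕ → Fin N → Fin N → ℂ) (e : ℕ → ℕ → ℕ) :
    (∫ x in a..b, ∑ p ∈ s1, ∑ q ∈ s2, ∑ l : Fin N, ∑ k : Fin N,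
        c p q l k * ((x:ℂ)^(e p q) * W x l k))
    = ∑ p ∈ s1, ∑ q ∈ s2, ∑ l : Fin N, ∑ k : Fin N,
        c p q l k * ∫ x in a..b, (x:ℂ)^(e p q) * W x l k := by
  rw [intervalIntegral.integral_finset_sum (f := fun p x => ∑ q ∈ s2, ∑ l : Fin N, ∑ k : Fin N,
        c p q l k * ((x:ℂ)^(e p q) * W x l k))
      (fun p _ => II_sum' _ _ (fun q _ => II_sum' _ _
        (fun l _ => II_sum' _ _ (fun k _ => (bi _ l k).const_mul _))))]
  refine Finset.sum_congr rfl fun p _ => ?_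
  rw [intervalIntegral.integral_finset_sum (f := fun q x => ∑ l : Fin N, ∑ k : Fin N,
        c p q l k * ((x:ℂ)^(e p q) * W x l k))
      (fun q _ => II_sum' _ _
        (fun l _ => II_sum' _ _ (fun k _ => (bi _ l k).const_mul _)))]
  refine Finset.sum_congr rfl fun q _ => ?_
  rw [intervalIntegral.integral_finset_sum (f := fun l x => ∑ k : Fin N,
        c p q l k * ((x:ℂ)^(e p q) * W x l k))
      (fun l _ => II_sum' _ _ (fun k _ => (bi _ l k).const_mul _))]
  refine Finset.sum_congr rfl fun l _ => ?_
  rw [intervalIntegral.integral_finset_sum (f := fun k x =>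
        c p q l k * ((x:ℂ)^(e p q) * W x l k))
      (fun k _ => (bi _ l k).const_mul _)]
  refine Finset.sum_congr rfl fun k _ => ?_
  exact intervalIntegral.integral_const_mul _ _

lemma mint_poly {N : ℕ} {a b : ℝ} {W : ℝ → Matrix (Fin N) (Fin N) ℂ}
    (bi : ∀ (m : ℕ) (k l : Fin N),
      IntervalIntegrable (fun x : ℝ => (x:ℂ)^m * W x k l) volume a b)
    (dL dR sL sR : ℕ) (cL cR : ℕ → Matrix (Fin N) (Fin N) ℂ) :
    mint a b (fun x => (∑ p ∈ Finset.range dL, ((x:ℂ)^(p+sL)) • cL p) * W x *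
        (∑ q ∈ Finset.range dR, ((x:ℂ)^(q+sR)) • cR q))
      = ∑ p ∈ Finset.range dL, ∑ q ∈ Finset.range dR,
          cL p * Bmat a b W (p + sL + (q + sR)) * cR q := by
  ext i j
  show (∫ x in a..b, _) = _
  simp only [entry_expand W dL dR sL sR cL cR i j]
  rw [integral_sum4 bi (Finset.range dL) (Finset.range dR)
      (fun p q l k => cL p i l * cR q k j) (fun p q => p + sL + (q + sR))]
  simp only [Matrix.sum_apply, Matrix.mul_apply, Bmat, Matrix.of_apply]
  apply Finset.sum_congr rfl; intro p _
  apply Finset.sum_congr rfl; intro q _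
  rw [Finset.sum_comm]
  apply Finset.sum_congr rfl; intro l _
  rw [Finset.sum_mul]
  apply Finset.sum_congr rfl; intro k _
  ring

lemma mint_add {N : ℕ} {a b : ℝ} {F G : ℝ → Matrix (Fin N) (Fin N) ℂ}
    (hF : ∀ i j, IntervalIntegrable (fun x => F x i j) volume a b)
    (hG : ∀ i j, IntervalIntegrable (fun x => G x i j) volume a b) :
    mint a b (fun x => F x + G x) = mint a b F + mint a b G := by
  ext i j
  show (∫ x in a..b, (F x + G x) i j) = _
  simp only [Matrix.add_apply]
  rw [intervalIntegral.integral_add (hF i j) (hG i j)]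
  rfl

lemma hermBmat {N : ℕ} {a b : ℝ} (hab : a < b) {W : ℝ → Matrix (Fin N) (Fin N) ℂ}
    (hWpos : ∀ x ∈ Set.Ioo a b, (W x).PosDef) (m : ℕ) :
    (Bmat a b W m)ᴴ = Bmat a b W m := by
  have hb : ∀ᵐ x : ℝ, x ≠ b := by
    have : ({x : ℝ | ¬ x ≠ b} : Set ℝ) = {b} := by ext x; simp
    rw [ae_iff, this, Real.volume_singleton]
  ext k l
  rw [Matrix.conjTranspose_apply]
  show star (∫ x in a..b, (x:ℂ)^m * W x l k) = ∫ x in a..b, (x:ℂ)^m * W x k l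
  have h1 : (starRingEnd ℂ) (∫ x in a..b, (x:ℂ)^m * W x l k)
      = ∫ x in a..b, (starRingEnd ℂ) ((x:ℂ)^m * W x l k) := by
    rw [intervalIntegral.integral_of_le hab.le, intervalIntegral.integral_of_le hab.le,
      integral_conj]
  rw [RCLike.star_def, h1]
  apply intervalIntegral.integral_congr_ae
  filter_upwards [hb] with x hxb hmem
  rw [Set.uIoc_of_le hab.le] at hmem
  have hx : x ∈ Set.Ioo a b := ⟨hmem.1, lt_of_le_of_ne hmem.2 hxb⟩
  rw [_root_.map_mul, map_pow, Complex.conj_ofReal]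
  congr 1
  have hH := (hWpos x hx).1
  calc (starRingEnd ℂ) (W x l k) = (W x)ᴴ k l := by rw [Matrix.conjTranspose_apply]; rfl
    _ = W x k l := by rw [hH]

lemma KPI {N : ℕ} (d : ℕ) (c : ℕ → Matrix (Fin N) (Fin N) ℂ) (z u : ℂ) :
    pE c d u = pE c d z + (u - z) • ∑ i ∈ Finset.range d, u^i • sS c d z i := by
  unfold pE sS
  have key : (u - z) • ∑ i ∈ Finset.range d, u^i •
      (∑ j ∈ Finset.range (d+1), (if i < j then z^(j-1-i) else (0:ℂ)) • c j)
      = ∑ j ∈ Finset.range (d+1), (u^j - z^j) • c j := by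
    rw [Finset.smul_sum]
    simp only [Finset.smul_sum, smul_smul, smul_ite, smul_zero, mul_ite, mul_zero]
    rw [Finset.sum_comm]
    apply Finset.sum_congr rfl; intro j hj
    rw [← Finset.sum_smul]
    congr 1
    have hjd : j ≤ d := by simp at hj; omega
    have hf : (Finset.range d).filter (· < j) = Finset.range j := by
      ext x; simp [Finset.mem_filter]; omega
    rw [← Finset.sum_filter, hf, ← geom_sum₂_mul u z j, Finset.sum_mul]
    apply Finset.sum_congr rfl; intro i _
    ring
  rw [key, ← Finset.sum_add_distrib]
  apply Finset.sum_congr rfl; intro j _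
  rw [← add_smul]
  ring_nf

lemma sS_top {N : ℕ} (e : ℕ) (c : ℕ → Matrix (Fin N) (Fin N) ℂ) (z : ℂ) :
    sS c (e+1) z e = c (e+1) := by
  unfold sS
  rw [Finset.sum_range_succ]
  have h1 : ∀ j ∈ Finset.range (e+1), (if e < j then z^(j-1-e) else (0:ℂ)) • c j = 0 := by
    intro j hj
    simp at hj
    rw [if_neg (by omega), zero_smul]
  rw [Finset.sum_congr rfl h1]
  simp

lemma sS_conj {N : ℕ} (d : ℕ) (c : ℕ → Matrix (Fin N) (Fin N) ℂ) (z : ℂ) (i : ℕ) :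
    (sS c d (starRingEnd ℂ z) i)ᴴ = sS (fun j => (c j)ᴴ) d z i := by
  unfold sS
  rw [Matrix.conjTranspose_sum]
  apply Finset.sum_congr rfl; intro j _
  rw [Matrix.conjTranspose_smul]
  congr 1
  simp only [Complex.star_def, apply_ite (starRingEnd ℂ), map_pow, Complex.conj_conj, map_zero]

lemma pE_conj {N : ℕ} (d : ℕ) (c : ℕ → Matrix (Fin N) (Fin N) ℂ) (z : ℂ) :
    (pE c d (starRingEnd ℂ z))ᴴ = pE (fun j => (c j)ᴴ) d z := by
  unfold pE
  rw [Matrix.conjTranspose_sum]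
  apply Finset.sum_congr rfl; intro j _
  rw [Matrix.conjTranspose_smul]
  congr 1
  simp only [Complex.star_def, map_pow, Complex.conj_conj]

lemma qE_conj {N : ℕ} (d : ℕ) (c : ℕ → Matrix (Fin N) (Fin N) ℂ)
    (Bm : ℕ → Matrix (Fin N) (Fin N) ℂ) (hherm : ∀ m, (Bm m)ᴴ = Bm m) (z : ℂ) :
    (qE c Bm d (starRingEnd ℂ z))ᴴ = qS (fun j => (c j)ᴴ) Bm d z := by
  unfold qE qS
  rw [Matrix.conjTranspose_sum]
  apply Finset.sum_congr rfl; intro i _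
  rw [Matrix.conjTranspose_mul, hherm, sS_conj]

theorem stmt4
    (N : ℕ) (hN : 1 ≤ N) (a b : ℝ) (hab : a < b)
    (W : ℝ → Matrix (Fin N) (Fin N) ℂ)
    (hWcont : ContinuousOn W (Set.Ioo a b))
    (hWpos : ∀ x ∈ Set.Ioo a b, (W x).PosDef)
    (hWmom : ∀ (n : ℕ) (i j : Fin N),
      IntegrableOn (fun x : ℝ => |x| ^ n * ‖W x i j‖) (Set.Ioo a b))
    (hWnt : ∀ (d : ℕ) (c : Fin (d + 1) → Matrix (Fin N) (Fin N) ℂ), (∃ k, c k ≠ 0) →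
      IsUnit (mint a b (fun x =>
        (∑ k : Fin (d + 1), ((x : ℂ) ^ (k : ℕ)) • c k) * W x * (∑ k : Fin (d + 1), ((x : ℂ) ^ (k : ℕ)) • c k)ᴴ)))
    (aC : ℕ → ℤ → Matrix (Fin N) (Fin N) ℂ)
    (haDiag : ∀ n : ℕ, aC n n = 1)
    (haHigh : ∀ (n : ℕ) (j : ℤ), (n : ℤ) < j → aC n j = 0)
    (haLow : ∀ (n : ℕ) (j : ℤ), j < 0 → aC n j = 0)
    (P : ℕ → ℂ → Matrix (Fin N) (Fin N) ℂ)
    (hP : ∀ (n : ℕ) (z : ℂ), P n z = ∑ j ∈ Finset.range (n + 1), z ^ j • aC n j)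
    (horth : ∀ n j : ℕ, j < n →
      mint a b (fun x => ((x : ℂ) ^ j) • (P n (x : ℂ) * W x)) = 0)
    (γ : ℕ → Matrix (Fin N) (Fin N) ℂ)
    (hγ : ∀ n : ℕ, γ n * mint a b (fun x => P n (x : ℂ) * W x * (P n (x : ℂ))ᴴ) = 1)
    (κ : ℕ → Matrix (Fin N) (Fin N) ℂ)
    (hκu : ∀ n : ℕ, IsUnit (κ n))
    (hκ : ∀ n : ℕ, (κ n)ᴴ * κ n = γ n)
    (Pn : ℕ → ℂ → Matrix (Fin N) (Fin N) ℂ)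
    (hPn : ∀ (n : ℕ) (z : ℂ), Pn n z = κ n * P n z)
    (Q : ℕ → ℂ → Matrix (Fin N) (Fin N) ℂ)
    (hQ : ∀ (n : ℕ) (z : ℂ),
      Q n z = mint a b (fun t => ((t : ℂ) - z)⁻¹ • ((Pn n (t : ℂ) - Pn n z) * W t)))
 :
    ∀ n : ℕ, 1 ≤ n → ∀ z : ℂ,
      (Matrix.fromBlocks
          ((κ n)⁻¹ * Pn n z)
          ((2 * (Real.pi : ℂ) * Complex.I)⁻¹ • ((κ n)⁻¹ * Q n z))
          (-((2 * (Real.pi : ℂ) * Complex.I) • ((κ (n - 1))ᴴ * Pn (n - 1) z)))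
          (-((κ (n - 1))ᴴ * Q (n - 1) z))) *
        (Matrix.fromBlocks
          (-((Q (n - 1) (starRingEnd ℂ z))ᴴ * κ (n - 1)))
          (-((2 * (Real.pi : ℂ) * Complex.I)⁻¹ • ((Q n (starRingEnd ℂ z))ᴴ * ((κ n)⁻¹)ᴴ)))
          ((2 * (Real.pi : ℂ) * Complex.I) • ((Pn (n - 1) (starRingEnd ℂ z))ᴴ * κ (n - 1)))
          ((Pn n (starRingEnd ℂ z))ᴴ * ((κ n)⁻¹)ᴴ)) = 1 ∧
      (Matrix.fromBlocks
          (-((Q (n - 1) (starRingEnd ℂ z))ᴴ * κ (n - 1)))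
          (-((2 * (Real.pi : ℂ) * Complex.I)⁻¹ • ((Q n (starRingEnd ℂ z))ᴴ * ((κ n)⁻¹)ᴴ)))
          ((2 * (Real.pi : ℂ) * Complex.I) • ((Pn (n - 1) (starRingEnd ℂ z))ᴴ * κ (n - 1)))
          ((Pn n (starRingEnd ℂ z))ᴴ * ((κ n)⁻¹)ᴴ)) *
        (Matrix.fromBlocks
          ((κ n)⁻¹ * Pn n z)
          ((2 * (Real.pi : ℂ) * Complex.I)⁻¹ • ((κ n)⁻¹ * Q n z))
          (-((2 * (Real.pi : ℂ) * Complex.I) • ((κ (n - 1))ᴴ * Pn (n - 1) z)))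
          (-((κ (n - 1))ᴴ * Q (n - 1) z))) = 1 := by
  intro n hn z
  obtain ⟨m, rfl⟩ : ∃ m, n = m + 1 := ⟨n - 1, by omega⟩
  simp only [Nat.add_sub_cancel]
  have hbi := basic_int hab hWcont hWmom
  have hherm : ∀ m', (Bmat a b W m')ᴴ = Bmat a b W m' := hermBmat hab hWpos
  have hPe : ∀ (k : ℕ) (w : ℂ), P k w = pE (fun j => aC k (j:ℤ)) k w := by
    intro k w; rw [hP]; rfl
  -- orthogonality in Bmat form
  have hHO : ∀ k j : ℕ, j < k →
      ∑ p ∈ Finset.range (k+1), aC k (p:ℤ) * Bmat a b W (p + j) = 0 := by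
    intro k j hjk
    have h0 := horth k j hjk
    have he : (fun x : ℝ => ((x:ℂ)^j) • (P k (x:ℂ) * W x))
        = fun x : ℝ => (∑ p ∈ Finset.range (k+1), ((x:ℂ)^(p+j)) • aC k (p:ℤ)) * W x *
            (∑ q ∈ Finset.range 1, ((x:ℂ)^(q+0)) •
              (fun _ : ℕ => (1 : Matrix (Fin N) (Fin N) ℂ)) q) := by
      funext x
      rw [hP]
      have h1 : (∑ q ∈ Finset.range 1, ((x:ℂ)^(q+0)) •
          (fun _ : ℕ => (1 : Matrix (Fin N) (Fin N) ℂ)) q) = 1 := by simp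
      rw [h1, mul_one, ← Matrix.smul_mul, Finset.smul_sum]
      refine congrArg (fun M => M * W x) (Finset.sum_congr rfl fun p _ => ?_)
      rw [smul_smul, pow_add, mul_comm]
    rw [he, mint_poly hbi] at h0
    simpa using h0
  have hHO' : ∀ k j : ℕ, j < k →
      ∑ q ∈ Finset.range (k+1), Bmat a b W (j + q) * (aC k (q:ℤ))ᴴ = 0 := by
    intro k j hjk
    have h0 := congrArg Matrix.conjTranspose (hHO k j hjk)
    rw [Matrix.conjTranspose_sum] at h0
    simp only [Matrix.conjTranspose_mul, hherm, Matrix.conjTranspose_zero] at h0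
    calc ∑ q ∈ Finset.range (k+1), Bmat a b W (j + q) * (aC k (q:ℤ))ᴴ
        = ∑ q ∈ Finset.range (k+1), Bmat a b W (q + j) * (aC k (q:ℤ))ᴴ := by
          refine Finset.sum_congr rfl fun q _ => ?_; rw [Nat.add_comm]
      _ = 0 := h0
  -- the Gram-type matrix
  have hGfull : ∀ k : ℕ, mint a b (fun x => P k (x:ℂ) * W x * (P k (x:ℂ))ᴴ)
      = ∑ p ∈ Finset.range (k+1), ∑ q ∈ Finset.range (k+1),
          aC k (p:ℤ) * Bmat a b W (p + 0 + (q + 0)) * (aC k (q:ℤ))ᴴ := by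
    intro k
    have he : (fun x : ℝ => P k (x:ℂ) * W x * (P k (x:ℂ))ᴴ)
        = fun x : ℝ => (∑ p ∈ Finset.range (k+1), ((x:ℂ)^(p+0)) • aC k (p:ℤ)) * W x *
            (∑ q ∈ Finset.range (k+1), ((x:ℂ)^(q+0)) • (aC k (q:ℤ))ᴴ) := by
      funext x
      rw [hP]
      simp only [add_zero]
      congr 1
      rw [Matrix.conjTranspose_sum]
      refine Finset.sum_congr rfl fun q _ => ?_
      rw [Matrix.conjTranspose_smul]
      congr 1
      simp [Complex.star_def, Complex.conj_ofReal]
    rw [he, mint_poly hbi]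
  have hG1 : ∀ k : ℕ, (∑ p ∈ Finset.range (k+1), ∑ q ∈ Finset.range (k+1),
          aC k (p:ℤ) * Bmat a b W (p + 0 + (q + 0)) * (aC k (q:ℤ))ᴴ)
      = ∑ p ∈ Finset.range (k+1), aC k (p:ℤ) * Bmat a b W (p + k) := by
    intro k
    simp only [add_zero]
    rw [Finset.sum_comm, Finset.sum_range_succ]
    have hz : ∀ q ∈ Finset.range k, ∑ p ∈ Finset.range (k+1),
        aC k (p:ℤ) * Bmat a b W (p + q) * (aC k (q:ℤ))ᴴ = 0 := by
      intro q hq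
      rw [← Finset.sum_mul, hHO k q (Finset.mem_range.mp hq), zero_mul]
    rw [Finset.sum_eq_zero hz, zero_add, haDiag k]
    simp
  have hG2 : ∀ k : ℕ, (∑ p ∈ Finset.range (k+1), ∑ q ∈ Finset.range (k+1),
          aC k (p:ℤ) * Bmat a b W (p + 0 + (q + 0)) * (aC k (q:ℤ))ᴴ)
      = ∑ q ∈ Finset.range (k+1), Bmat a b W (k + q) * (aC k (q:ℤ))ᴴ := by
    intro k
    simp only [add_zero]
    rw [Finset.sum_range_succ]
    have hz : ∀ p ∈ Finset.range k, ∑ q ∈ Finset.range (k+1),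
        aC k (p:ℤ) * Bmat a b W (p + q) * (aC k (q:ℤ))ᴴ = 0 := by
      intro p hp
      have : ∀ q ∈ Finset.range (k+1), aC k (p:ℤ) * Bmat a b W (p + q) * (aC k (q:ℤ))ᴴ
          = aC k (p:ℤ) * (Bmat a b W (p + q) * (aC k (q:ℤ))ᴴ) := by
        intro q _; rw [mul_assoc]
      rw [Finset.sum_congr rfl this, ← Finset.mul_sum,
        hHO' k p (Finset.mem_range.mp hp), mul_zero]
    rw [Finset.sum_eq_zero hz, zero_add, haDiag k]
    simp
  have hγG : ∀ k : ℕ, γ k * (∑ p ∈ Finset.range (k+1), aC k (p:ℤ) * Bmat a b W (p + k)) = 1 := by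
    intro k
    have h0 := hγ k
    rw [hGfull, hG1] at h0
    exact h0
  have hGG : ∀ k : ℕ, (∑ q ∈ Finset.range (k+1), Bmat a b W (k + q) * (aC k (q:ℤ))ᴴ)
      = ∑ p ∈ Finset.range (k+1), aC k (p:ℤ) * Bmat a b W (p + k) := by
    intro k; rw [← hG2 k, hG1 k]
  -- second kind polynomials in algebraic form
  have hQeq : ∀ (k : ℕ) (w : ℂ),
      Q k w = κ k * qE (fun j => aC k (j:ℤ)) (Bmat a b W) k w := by
    intro k w
    rw [hQ]
    have hcongr : mint a b (fun t => ((t:ℂ) - w)⁻¹ • ((Pn k (t:ℂ) - Pn k w) * W t))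
        = mint a b (fun x : ℝ => (∑ i ∈ Finset.range k,
              ((x:ℂ)^(i+0)) • (κ k * sS (fun j => aC k (j:ℤ)) k w i)) * W x *
            (∑ q ∈ Finset.range 1, ((x:ℂ)^(q+0)) •
              (fun _ : ℕ => (1 : Matrix (Fin N) (Fin N) ℂ)) q)) := by
      apply mint_congr_ae hab
      filter_upwards [ae_ne_ofReal w] with x hxw _
      have h1 : (∑ q ∈ Finset.range 1, ((x:ℂ)^(q+0)) •
          (fun _ : ℕ => (1 : Matrix (Fin N) (Fin N) ℂ)) q) = 1 := by simp
      rw [h1, mul_one, hPn, hPn, ← Matrix.mul_sub]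
      have hsub : P k (x:ℂ) - P k w
          = ((x:ℂ) - w) • ∑ i ∈ Finset.range k, ((x:ℂ))^i • sS (fun j => aC k (j:ℤ)) k w i := by
        rw [hPe, hPe, KPI k (fun j => aC k (j:ℤ)) w (x:ℂ)]
        abel
      rw [hsub, Matrix.mul_smul, Matrix.smul_mul, smul_smul,
        inv_mul_cancel₀ (sub_ne_zero_of_ne hxw), one_smul, Finset.mul_sum]
      refine congrArg (fun M => M * W x) (Finset.sum_congr rfl fun i _ => ?_)
      rw [mul_smul_comm, add_zero]
    rw [hcongr, mint_poly hbi]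
    unfold qE
    rw [Finset.mul_sum]
    refine Finset.sum_congr rfl fun i _ => ?_
    simp [mul_assoc]
  -- conjugate transposes
  have hPst : ∀ (k : ℕ) (w : ℂ),
      (P k (starRingEnd ℂ w))ᴴ = pE (fun j => (aC k (j:ℤ))ᴴ) k w := by
    intro k w
    rw [hPe]
    exact pE_conj k (fun j => aC k (j:ℤ)) w
  have hQst : ∀ (k : ℕ) (w : ℂ),
      (Q k (starRingEnd ℂ w))ᴴ
        = qS (fun j => (aC k (j:ℤ))ᴴ) (Bmat a b W) k w * (κ k)ᴴ := by
    intro k w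
    rw [hQeq, Matrix.conjTranspose_mul, qE_conj k (fun j => aC k (j:ℤ)) (Bmat a b W) hherm w]
  -- the master identity
  have hMAIN : ∀ (k k' : ℕ) (w : ℂ),
      qE (fun j => aC k (j:ℤ)) (Bmat a b W) k w * pE (fun j => (aC k' (j:ℤ))ᴴ) k' w
        - pE (fun j => aC k (j:ℤ)) k w * qS (fun j => (aC k' (j:ℤ))ᴴ) (Bmat a b W) k' w
      = (∑ i ∈ Finset.range k, sS (fun j => aC k (j:ℤ)) k w i *
            (∑ q ∈ Finset.range (k'+1), Bmat a b W (i + q) * (aC k' (q:ℤ))ᴴ))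
        - (∑ i ∈ Finset.range k', (∑ p ∈ Finset.range (k+1),
              aC k (p:ℤ) * Bmat a b W (p + i)) * sS (fun j => (aC k' (j:ℤ))ᴴ) k' w i) := by
    intro k k' w
    have hpt : (fun x : ℝ => (∑ i ∈ Finset.range k, ((x:ℂ)^(i+0)) • sS (fun j => aC k (j:ℤ)) k w i) * W x *
            (∑ q ∈ Finset.range 1, ((x:ℂ)^(q+0)) •
              (fun _ : ℕ => pE (fun j => (aC k' (j:ℤ))ᴴ) k' w) q)
          + (∑ p ∈ Finset.range (k+1), ((x:ℂ)^(p+0)) • aC k (p:ℤ)) * W x *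
            (∑ i ∈ Finset.range k', ((x:ℂ)^(i+0)) • sS (fun j => (aC k' (j:ℤ))ᴴ) k' w i))
        = (fun x : ℝ => (∑ i ∈ Finset.range k, ((x:ℂ)^(i+0)) • sS (fun j => aC k (j:ℤ)) k w i) * W x *
            (∑ q ∈ Finset.range (k'+1), ((x:ℂ)^(q+0)) • (aC k' (q:ℤ))ᴴ)
          + (∑ p ∈ Finset.range 1, ((x:ℂ)^(p+0)) •
              (fun _ : ℕ => pE (fun j => aC k (j:ℤ)) k w) p) * W x *
            (∑ i ∈ Finset.range k', ((x:ℂ)^(i+0)) • sS (fun j => (aC k' (j:ℤ))ᴴ) k' w i)) := by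
      funext x
      simp only [add_zero, Finset.sum_range_one, pow_zero, one_smul]
      show (∑ i ∈ Finset.range k, ((x:ℂ)^i) • sS (fun j => aC k (j:ℤ)) k w i) * W x *
            pE (fun j => (aC k' (j:ℤ))ᴴ) k' w
          + pE (fun j => aC k (j:ℤ)) k (x:ℂ) * W x *
            (∑ i ∈ Finset.range k', ((x:ℂ)^i) • sS (fun j => (aC k' (j:ℤ))ᴴ) k' w i)
        = (∑ i ∈ Finset.range k, ((x:ℂ)^i) • sS (fun j => aC k (j:ℤ)) k w i) * W x *
            pE (fun j => (aC k' (j:ℤ))ᴴ) k' (x:ℂ)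
          + pE (fun j => aC k (j:ℤ)) k w * W x *
            (∑ i ∈ Finset.range k', ((x:ℂ)^i) • sS (fun j => (aC k' (j:ℤ))ᴴ) k' w i)
      rw [KPI k (fun j => aC k (j:ℤ)) w (x:ℂ), KPI k' (fun j => (aC k' (j:ℤ))ᴴ) w (x:ℂ)]
      simp only [mul_add, add_mul, Matrix.smul_mul, Matrix.mul_smul]
      abel
    have hadd1 := mint_add
      (F := fun x : ℝ => (∑ i ∈ Finset.range k, ((x:ℂ)^(i+0)) • sS (fun j => aC k (j:ℤ)) k w i) * W x *
            (∑ q ∈ Finset.range 1, ((x:ℂ)^(q+0)) •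
              (fun _ : ℕ => pE (fun j => (aC k' (j:ℤ))ᴴ) k' w) q))
      (G := fun x : ℝ => (∑ p ∈ Finset.range (k+1), ((x:ℂ)^(p+0)) • aC k (p:ℤ)) * W x *
            (∑ i ∈ Finset.range k', ((x:ℂ)^(i+0)) • sS (fun j => (aC k' (j:ℤ))ᴴ) k' w i))
      (fun i j => polyW_int hbi k 1 0 0 _ _ i j)
      (fun i j => polyW_int hbi (k+1) k' 0 0 _ _ i j)
    have hadd2 := mint_add
      (F := fun x : ℝ => (∑ i ∈ Finset.range k, ((x:ℂ)^(i+0)) • sS (fun j => aC k (j:ℤ)) k w i) * W x *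
            (∑ q ∈ Finset.range (k'+1), ((x:ℂ)^(q+0)) • (aC k' (q:ℤ))ᴴ))
      (G := fun x : ℝ => (∑ p ∈ Finset.range 1, ((x:ℂ)^(p+0)) •
              (fun _ : ℕ => pE (fun j => aC k (j:ℤ)) k w) p) * W x *
            (∑ i ∈ Finset.range k', ((x:ℂ)^(i+0)) • sS (fun j => (aC k' (j:ℤ))ᴴ) k' w i))
      (fun i j => polyW_int hbi k (k'+1) 0 0 _ _ i j)
      (fun i j => polyW_int hbi 1 k' 0 0 _ _ i j)
    have key := hadd1
    rw [hpt, hadd2] at key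
    rw [mint_poly hbi k 1 0 0 (fun i => sS (fun j => aC k (j:ℤ)) k w i)
          (fun _ => pE (fun j => (aC k' (j:ℤ))ᴴ) k' w),
        mint_poly hbi (k+1) k' 0 0 (fun p => aC k (p:ℤ))
          (fun i => sS (fun j => (aC k' (j:ℤ))ᴴ) k' w i),
        mint_poly hbi k (k'+1) 0 0 (fun i => sS (fun j => aC k (j:ℤ)) k w i)
          (fun q => (aC k' (q:ℤ))ᴴ),
        mint_poly hbi 1 k' 0 0 (fun _ => pE (fun j => aC k (j:ℤ)) k w)
          (fun i => sS (fun j => (aC k' (j:ℤ))ᴴ) k' w i)] at key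
    simp only [Finset.sum_range_one, add_zero, zero_add] at key
    have e1 : (∑ i ∈ Finset.range k, sS (fun j => aC k (j:ℤ)) k w i * Bmat a b W i *
          pE (fun j => (aC k' (j:ℤ))ᴴ) k' w)
        = qE (fun j => aC k (j:ℤ)) (Bmat a b W) k w * pE (fun j => (aC k' (j:ℤ))ᴴ) k' w := by
      rw [← Finset.sum_mul]; rfl
    have e2 : (∑ i ∈ Finset.range k', pE (fun j => aC k (j:ℤ)) k w * Bmat a b W i *
          sS (fun j => (aC k' (j:ℤ))ᴴ) k' w i)
        = pE (fun j => aC k (j:ℤ)) k w * qS (fun j => (aC k' (j:ℤ))ᴴ) (Bmat a b W) k' w := by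
      unfold qS
      rw [Finset.mul_sum]
      exact Finset.sum_congr rfl fun i _ => mul_assoc _ _ _
    have e3 : (∑ i ∈ Finset.range k, ∑ q ∈ Finset.range (k'+1),
          sS (fun j => aC k (j:ℤ)) k w i * Bmat a b W (i + q) * (aC k' (q:ℤ))ᴴ)
        = ∑ i ∈ Finset.range k, sS (fun j => aC k (j:ℤ)) k w i *
            (∑ q ∈ Finset.range (k'+1), Bmat a b W (i + q) * (aC k' (q:ℤ))ᴴ) := by
      refine Finset.sum_congr rfl fun i _ => ?_
      rw [Finset.mul_sum]
      exact Finset.sum_congr rfl fun q _ => mul_assoc _ _ _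
    have e4 : (∑ p ∈ Finset.range (k+1), ∑ i ∈ Finset.range k',
          aC k (p:ℤ) * Bmat a b W (p + i) * sS (fun j => (aC k' (j:ℤ))ᴴ) k' w i)
        = ∑ i ∈ Finset.range k', (∑ p ∈ Finset.range (k+1),
            aC k (p:ℤ) * Bmat a b W (p + i)) * sS (fun j => (aC k' (j:ℤ))ᴴ) k' w i := by
      rw [Finset.sum_comm]
      refine Finset.sum_congr rfl fun i _ => ?_
      rw [Finset.sum_mul]
    rw [e1, e2, e3, e4] at key
    rw [sub_eq_sub_iff_add_eq_add]
    exact key.symm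
  -- specializations of the master identity
  have hMAINnn : ∀ (k : ℕ) (w : ℂ),
      qE (fun j => aC k (j:ℤ)) (Bmat a b W) k w * pE (fun j => (aC k (j:ℤ))ᴴ) k w
        - pE (fun j => aC k (j:ℤ)) k w * qS (fun j => (aC k (j:ℤ))ᴴ) (Bmat a b W) k w = 0 := by
    intro k w
    rw [hMAIN k k w]
    rw [Finset.sum_eq_zero (fun i hi => by
        rw [hHO' k i (Finset.mem_range.mp hi), mul_zero]),
      Finset.sum_eq_zero (fun i hi => by
        rw [hHO k i (Finset.mem_range.mp hi), zero_mul]),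
      sub_self]
  have hMAINdown : ∀ (k : ℕ) (w : ℂ),
      qE (fun j => aC (k+1) (j:ℤ)) (Bmat a b W) (k+1) w * pE (fun j => (aC k (j:ℤ))ᴴ) k w
        - pE (fun j => aC (k+1) (j:ℤ)) (k+1) w * qS (fun j => (aC k (j:ℤ))ᴴ) (Bmat a b W) k w
      = ∑ p ∈ Finset.range (k+1), aC k (p:ℤ) * Bmat a b W (p + k) := by
    intro k w
    rw [hMAIN (k+1) k w]
    have hz2 : ∑ i ∈ Finset.range k, (∑ p ∈ Finset.range (k+1+1),
          aC (k+1) (p:ℤ) * Bmat a b W (p + i)) * sS (fun j => (aC k (j:ℤ))ᴴ) k w i = 0 :=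
      Finset.sum_eq_zero (fun i hi => by
        rw [hHO (k+1) i (Nat.lt_succ_of_lt (Finset.mem_range.mp hi)), zero_mul])
    rw [hz2, sub_zero, Finset.sum_range_succ]
    have hz1 : ∑ i ∈ Finset.range k, sS (fun j => aC (k+1) (j:ℤ)) (k+1) w i *
          (∑ q ∈ Finset.range (k+1), Bmat a b W (i + q) * (aC k (q:ℤ))ᴴ) = 0 :=
      Finset.sum_eq_zero (fun i hi => by
        rw [hHO' k i (Finset.mem_range.mp hi), mul_zero])
    rw [hz1, zero_add, sS_top k (fun j => aC (k+1) (j:ℤ)) w, haDiag (k+1), one_mul]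
    exact hGG k
  have hMAINup : ∀ (k : ℕ) (w : ℂ),
      qE (fun j => aC k (j:ℤ)) (Bmat a b W) k w * pE (fun j => (aC (k+1) (j:ℤ))ᴴ) (k+1) w
        - pE (fun j => aC k (j:ℤ)) k w * qS (fun j => (aC (k+1) (j:ℤ))ᴴ) (Bmat a b W) (k+1) w
      = -(∑ p ∈ Finset.range (k+1), aC k (p:ℤ) * Bmat a b W (p + k)) := by
    intro k w
    rw [hMAIN k (k+1) w]
    have hz1 : ∑ i ∈ Finset.range k, sS (fun j => aC k (j:ℤ)) k w i *
          (∑ q ∈ Finset.range (k+1+1), Bmat a b W (i + q) * (aC (k+1) (q:ℤ))ᴴ) = 0 :=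
      Finset.sum_eq_zero (fun i hi => by
        rw [hHO' (k+1) i (Nat.lt_succ_of_lt (Finset.mem_range.mp hi)), mul_zero])
    rw [hz1, zero_sub]
    congr 1
    rw [Finset.sum_range_succ]
    have hz2 : ∑ i ∈ Finset.range k, (∑ p ∈ Finset.range (k+1),
          aC k (p:ℤ) * Bmat a b W (p + i)) * sS (fun j => (aC (k+1) (j:ℤ))ᴴ) (k+1) w i = 0 :=
      Finset.sum_eq_zero (fun i hi => by
        rw [hHO k i (Finset.mem_range.mp hi), zero_mul])
    rw [hz2, zero_add, sS_top k (fun j => (aC (k+1) (j:ℤ))ᴴ) w, haDiag (k+1),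
      Matrix.conjTranspose_one, mul_one]
  -- kappa facts
  have hκ1 : ∀ k : ℕ, (κ k)⁻¹ * κ k = 1 :=
    fun k => Matrix.nonsing_inv_mul _ ((Matrix.isUnit_iff_isUnit_det _).mp (hκu k))
  have hκ2 : ∀ k : ℕ, (κ k)ᴴ * ((κ k)⁻¹)ᴴ = 1 := by
    intro k
    rw [← Matrix.conjTranspose_mul, hκ1, Matrix.conjTranspose_one]
  have hc2 : (2 * (Real.pi:ℂ) * Complex.I) ≠ 0 :=
    mul_ne_zero (mul_ne_zero two_ne_zero (by exact_mod_cast Real.pi_ne_zero)) Complex.I_ne_zero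
  -- block simplifications
  have hA : (κ (m+1))⁻¹ * Pn (m+1) z = pE (fun j => aC (m+1) (j:ℤ)) (m+1) z := by
    rw [hPn, ← mul_assoc, hκ1, one_mul, hPe]
  have hB : (κ (m+1))⁻¹ * Q (m+1) z = qE (fun j => aC (m+1) (j:ℤ)) (Bmat a b W) (m+1) z := by
    rw [hQeq, ← mul_assoc, hκ1, one_mul]
  have hC : (κ m)ᴴ * Pn m z = γ m * pE (fun j => aC m (j:ℤ)) m z := by
    rw [hPn, ← mul_assoc, hκ, hPe]
  have hD : (κ m)ᴴ * Q m z = γ m * qE (fun j => aC m (j:ℤ)) (Bmat a b W) m z := by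
    rw [hQeq, ← mul_assoc, hκ]
  have ha' : (Q m (starRingEnd ℂ z))ᴴ * κ m
      = qS (fun j => (aC m (j:ℤ))ᴴ) (Bmat a b W) m z * γ m := by
    rw [hQst, mul_assoc, hκ]
  have hb' : (Q (m+1) (starRingEnd ℂ z))ᴴ * ((κ (m+1))⁻¹)ᴴ
      = qS (fun j => (aC (m+1) (j:ℤ))ᴴ) (Bmat a b W) (m+1) z := by
    rw [hQst, mul_assoc, hκ2, mul_one]
  have hc' : (Pn m (starRingEnd ℂ z))ᴴ * κ m = pE (fun j => (aC m (j:ℤ))ᴴ) m z * γ m := by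
    rw [hPn, Matrix.conjTranspose_mul, hPst, mul_assoc, hκ]
  have hd' : (Pn (m+1) (starRingEnd ℂ z))ᴴ * ((κ (m+1))⁻¹)ᴴ
      = pE (fun j => (aC (m+1) (j:ℤ))ᴴ) (m+1) z := by
    rw [hPn, Matrix.conjTranspose_mul, hPst, mul_assoc, hκ2, mul_one]
  -- the four block identities
  have hTL : ((κ (m+1))⁻¹ * Pn (m+1) z) * (-((Q m (starRingEnd ℂ z))ᴴ * κ m))
      + ((2 * (Real.pi : ℂ) * Complex.I)⁻¹ • ((κ (m+1))⁻¹ * Q (m+1) z)) *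
        ((2 * (Real.pi : ℂ) * Complex.I) • ((Pn m (starRingEnd ℂ z))ᴴ * κ m)) = 1 := by
    rw [hA, hB, ha', hc']
    rw [Matrix.smul_mul, Matrix.mul_smul, smul_smul, inv_mul_cancel₀ hc2, one_smul]
    have hre : pE (fun j => aC (m+1) (j:ℤ)) (m+1) z *
          -(qS (fun j => (aC m (j:ℤ))ᴴ) (Bmat a b W) m z * γ m)
        + qE (fun j => aC (m+1) (j:ℤ)) (Bmat a b W) (m+1) z *
          (pE (fun j => (aC m (j:ℤ))ᴴ) m z * γ m)
        = (qE (fun j => aC (m+1) (j:ℤ)) (Bmat a b W) (m+1) z *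
            pE (fun j => (aC m (j:ℤ))ᴴ) m z
          - pE (fun j => aC (m+1) (j:ℤ)) (m+1) z *
            qS (fun j => (aC m (j:ℤ))ᴴ) (Bmat a b W) m z) * γ m := by
      noncomm_ring
    rw [hre, hMAINdown m z]
    exact mul_eq_one_comm.mp (hγG m)
  have hTR : ((κ (m+1))⁻¹ * Pn (m+1) z) *
        (-((2 * (Real.pi : ℂ) * Complex.I)⁻¹ • ((Q (m+1) (starRingEnd ℂ z))ᴴ * ((κ (m+1))⁻¹)ᴴ)))
      + ((2 * (Real.pi : ℂ) * Complex.I)⁻¹ • ((κ (m+1))⁻¹ * Q (m+1) z)) *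
        ((Pn (m+1) (starRingEnd ℂ z))ᴴ * ((κ (m+1))⁻¹)ᴴ) = 0 := by
    rw [hA, hB, hb', hd']
    have hre : pE (fun j => aC (m+1) (j:ℤ)) (m+1) z *
          -((2 * (Real.pi : ℂ) * Complex.I)⁻¹ •
            qS (fun j => (aC (m+1) (j:ℤ))ᴴ) (Bmat a b W) (m+1) z)
        + ((2 * (Real.pi : ℂ) * Complex.I)⁻¹ •
            qE (fun j => aC (m+1) (j:ℤ)) (Bmat a b W) (m+1) z) *
          pE (fun j => (aC (m+1) (j:ℤ))ᴴ) (m+1) z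
        = (2 * (Real.pi : ℂ) * Complex.I)⁻¹ •
          (qE (fun j => aC (m+1) (j:ℤ)) (Bmat a b W) (m+1) z *
            pE (fun j => (aC (m+1) (j:ℤ))ᴴ) (m+1) z
          - pE (fun j => aC (m+1) (j:ℤ)) (m+1) z *
            qS (fun j => (aC (m+1) (j:ℤ))ᴴ) (Bmat a b W) (m+1) z) := by
      rw [mul_neg, Matrix.mul_smul, Matrix.smul_mul, smul_sub]
      abel
    rw [hre, hMAINnn (m+1) z, smul_zero]
  have hBL : (-((2 * (Real.pi : ℂ) * Complex.I) • ((κ m)ᴴ * Pn m z))) *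
        (-((Q m (starRingEnd ℂ z))ᴴ * κ m))
      + (-((κ m)ᴴ * Q m z)) *
        ((2 * (Real.pi : ℂ) * Complex.I) • ((Pn m (starRingEnd ℂ z))ᴴ * κ m)) = 0 := by
    rw [hC, hD, ha', hc']
    have h0 : pE (fun j => aC m (j:ℤ)) m z * qS (fun j => (aC m (j:ℤ))ᴴ) (Bmat a b W) m z
        = qE (fun j => aC m (j:ℤ)) (Bmat a b W) m z * pE (fun j => (aC m (j:ℤ))ᴴ) m z :=
      (sub_eq_zero.mp (hMAINnn m z)).symm
    have hre : (-((2 * (Real.pi : ℂ) * Complex.I) • (γ m * pE (fun j => aC m (j:ℤ)) m z))) *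
          (-(qS (fun j => (aC m (j:ℤ))ᴴ) (Bmat a b W) m z * γ m))
        + (-(γ m * qE (fun j => aC m (j:ℤ)) (Bmat a b W) m z)) *
          ((2 * (Real.pi : ℂ) * Complex.I) • (pE (fun j => (aC m (j:ℤ))ᴴ) m z * γ m))
        = (2 * (Real.pi : ℂ) * Complex.I) •
          (γ m * (pE (fun j => aC m (j:ℤ)) m z *
              qS (fun j => (aC m (j:ℤ))ᴴ) (Bmat a b W) m z) * γ m
          - γ m * (qE (fun j => aC m (j:ℤ)) (Bmat a b W) m z *
              pE (fun j => (aC m (j:ℤ))ᴴ) m z) * γ m) := by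
      rw [smul_sub]
      simp only [Matrix.smul_mul, Matrix.mul_smul, neg_mul, mul_neg, neg_neg, smul_neg,
        mul_assoc]
      abel
    rw [hre, h0, sub_self, smul_zero]
  have hBR : (-((2 * (Real.pi : ℂ) * Complex.I) • ((κ m)ᴴ * Pn m z))) *
        (-((2 * (Real.pi : ℂ) * Complex.I)⁻¹ • ((Q (m+1) (starRingEnd ℂ z))ᴴ * ((κ (m+1))⁻¹)ᴴ)))
      + (-((κ m)ᴴ * Q m z)) * ((Pn (m+1) (starRingEnd ℂ z))ᴴ * ((κ (m+1))⁻¹)ᴴ) = 1 := by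
    rw [hC, hD, hb', hd']
    have hG' : pE (fun j => aC m (j:ℤ)) m z *
          qS (fun j => (aC (m+1) (j:ℤ))ᴴ) (Bmat a b W) (m+1) z
        - qE (fun j => aC m (j:ℤ)) (Bmat a b W) m z *
          pE (fun j => (aC (m+1) (j:ℤ))ᴴ) (m+1) z
        = ∑ p ∈ Finset.range (m+1), aC m (p:ℤ) * Bmat a b W (p + m) := by
      have := hMAINup m z
      have h2 := congrArg Neg.neg this
      rw [neg_sub, neg_neg] at h2
      exact h2
    have hre : (-((2 * (Real.pi : ℂ) * Complex.I) • (γ m * pE (fun j => aC m (j:ℤ)) m z))) *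
          (-((2 * (Real.pi : ℂ) * Complex.I)⁻¹ •
            qS (fun j => (aC (m+1) (j:ℤ))ᴴ) (Bmat a b W) (m+1) z))
        + (-(γ m * qE (fun j => aC m (j:ℤ)) (Bmat a b W) m z)) *
          pE (fun j => (aC (m+1) (j:ℤ))ᴴ) (m+1) z
        = ((2 * (Real.pi : ℂ) * Complex.I) * (2 * (Real.pi : ℂ) * Complex.I)⁻¹) •
          (γ m * (pE (fun j => aC m (j:ℤ)) m z *
            qS (fun j => (aC (m+1) (j:ℤ))ᴴ) (Bmat a b W) (m+1) z))
          - γ m * (qE (fun j => aC m (j:ℤ)) (Bmat a b W) m z *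
            pE (fun j => (aC (m+1) (j:ℤ))ᴴ) (m+1) z) := by
      rw [neg_mul_neg, Matrix.smul_mul, Matrix.mul_smul, smul_smul]
      simp only [neg_mul, mul_assoc]
      abel
    rw [hre, mul_inv_cancel₀ hc2, one_smul, ← mul_sub, hG']
    exact hγG m
  have h1 : (Matrix.fromBlocks
        ((κ (m+1))⁻¹ * Pn (m+1) z)
        ((2 * (Real.pi : ℂ) * Complex.I)⁻¹ • ((κ (m+1))⁻¹ * Q (m+1) z))
        (-((2 * (Real.pi : ℂ) * Complex.I) • ((κ m)ᴴ * Pn m z)))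
        (-((κ m)ᴴ * Q m z))) *
      (Matrix.fromBlocks
        (-((Q m (starRingEnd ℂ z))ᴴ * κ m))
        (-((2 * (Real.pi : ℂ) * Complex.I)⁻¹ • ((Q (m+1) (starRingEnd ℂ z))ᴴ * ((κ (m+1))⁻¹)ᴴ)))
        ((2 * (Real.pi : ℂ) * Complex.I) • ((Pn m (starRingEnd ℂ z))ᴴ * κ m))
        ((Pn (m+1) (starRingEnd ℂ z))ᴴ * ((κ (m+1))⁻¹)ᴴ)) = 1 := by
    rw [Matrix.fromBlocks_multiply, hTL, hTR, hBL, hBR]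
    exact Matrix.fromBlocks_one
  exact ⟨h1, mul_eq_one_comm.mp h1⟩
end

section
/- For every n ≥ 1 and every m ≥ 1, the coefficients of the monic matrix orthogonal polynomials and the moment coefficients b_{n,k} satisfy Σ_{j=0}^m a_{n,n-m+j}·b_{n-1,n+j-1}* = Σ_{j=0}^m b_{n,n+m-j-1}·a_{n-1,n-j}*. -/
/-!
Write `μ k = ∫ x^k W` for the (Hermitian) moments of `W`. Expanding `P̂_n` gives
`b_{n,k} = Σ_l a_{n,l} μ_{k+l}`, and orthogonality says `b_{n,k} = 0` for `k < n`. Together with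
`a_{n,j} = 0` outside `0 ≤ j ≤ n`, this lets both sums of the identity be extended to the full
ranges `0 ≤ l ≤ n`, `0 ≤ p ≤ n - 1`, where each becomes the double sum
`Σ_{l,p} a_{n,l} μ_{l+p+m-1} a_{n-1,p}*`.
-/

open MeasureTheory Matrix Complex Finset
open scoped ComplexOrder

theorem sum_range_int_shift_eq_sum_range {M : Type*} [AddCommMonoid M] (f : ℤ → M) (c : ℤ)
    (m n : ℕ) (hf : ∀ l, f l ≠ 0 → c ≤ l ∧ l ≤ c + m ∧ 0 ≤ l ∧ l < n) :
    ∑ j ∈ range (m + 1), f (c + j) = ∑ l ∈ range n, f l := by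
  refine sum_bij_ne_zero (fun j _ _ => (c + j).toNat) ?_ ?_ ?_ ?_
  · intro j _ hj
    have := hf _ hj
    simp only [mem_range]
    omega
  · intro j₁ _ hj₁ j₂ _ hj₂ h
    have := hf _ hj₁
    have := hf _ hj₂
    omega
  · intro l _ hl
    have := hf _ hl
    refine ⟨(l - c).toNat, mem_range.2 (by omega), ?_, by omega⟩
    rwa [show c + ((l - c).toNat : ℤ) = l by omega]
  · intro j _ hj
    rw [Int.toNat_of_nonneg (hf _ hj).2.2.1]

section MatrixIntegral

variable {N : ℕ} {a b : ℝ}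

theorem intervalIntegrable_mul_apply {F : ℝ → Matrix (Fin N) (Fin N) ℂ}
    (hF : ∀ p q, IntervalIntegrable (fun x => F x p q) volume a b)
    (A : Matrix (Fin N) (Fin N) ℂ) (p q : Fin N) :
    IntervalIntegrable (fun x => (A * F x) p q) volume a b := by
  simpa only [mul_apply, Finset.sum_fn] using
    IntervalIntegrable.sum univ fun r _ => (hF r q).const_mul (A p r)

theorem mint_const_mul {F : ℝ → Matrix (Fin N) (Fin N) ℂ}
    (hF : ∀ p q, IntervalIntegrable (fun x => F x p q) volume a b)
    (A : Matrix (Fin N) (Fin N) ℂ) :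
    mint a b (fun x => A * F x) = A * mint a b F := by
  ext p q
  simp only [mint, of_apply, mul_apply]
  rw [intervalIntegral.integral_finsetSum fun r _ => (hF r q).const_mul (A p r)]
  simp only [intervalIntegral.integral_const_mul]

theorem mint_sum {ι : Type*} (s : Finset ι) {F : ι → ℝ → Matrix (Fin N) (Fin N) ℂ}
    (hF : ∀ i ∈ s, ∀ p q, IntervalIntegrable (fun x => F i x p q) volume a b) :
    mint a b (fun x => ∑ i ∈ s, F i x) = ∑ i ∈ s, mint a b (F i) := by
  ext p q
  simp only [mint, of_apply, Matrix.sum_apply]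
  exact intervalIntegral.integral_finsetSum fun i hi => hF i hi p q

theorem conjTranspose_mint (F : ℝ → Matrix (Fin N) (Fin N) ℂ) :
    (mint a b F)ᴴ = mint a b (fun x => (F x)ᴴ) := by
  ext p q
  simp only [mint, conjTranspose_apply, of_apply]
  exact (conjLIE.toLinearIsometry.intervalIntegral_comp_comm _).symm

theorem mint_congr (hab : a ≤ b) {F G : ℝ → Matrix (Fin N) (Fin N) ℂ}
    (h : Set.EqOn F G (Set.Ioo a b)) : mint a b F = mint a b G := by
  ext p q
  simp only [mint, of_apply, intervalIntegral.integral_of_le hab, integral_Ioc_eq_integral_Ioo]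
  exact setIntegral_congr_fun measurableSet_Ioo fun x hx => by rw [h hx]

theorem isHermitian_mint (hab : a ≤ b) {F : ℝ → Matrix (Fin N) (Fin N) ℂ}
    (hF : ∀ x ∈ Set.Ioo a b, (F x).IsHermitian) : (mint a b F).IsHermitian := by
  rw [IsHermitian, conjTranspose_mint]
  exact mint_congr hab hF

theorem intervalIntegrable_pow_smul_apply (hab : a ≤ b)
    {W : ℝ → Matrix (Fin N) (Fin N) ℂ} (hWcont : ContinuousOn W (Set.Ioo a b))
    (hWmom : ∀ (n : ℕ) (i j : Fin N),
      IntegrableOn (fun x : ℝ => |x| ^ n * ‖W x i j‖) (Set.Ioo a b))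
    (k : ℕ) (p q : Fin N) :
    IntervalIntegrable (fun x => ((x : ℂ) ^ k • W x) p q) volume a b := by
  rw [intervalIntegrable_iff_integrableOn_Ioo_of_le hab]
  refine (hWmom k p q).mono' ?_ (Filter.Eventually.of_forall fun x => by simp)
  exact ((continuous_ofReal.pow k).continuousOn.smul
    ((continuous_apply_apply p q).comp_continuousOn hWcont)).aestronglyMeasurable measurableSet_Ioo

theorem mint_pow_smul_sum_mul {W : ℝ → Matrix (Fin N) (Fin N) ℂ}
    (hW : ∀ k p q, IntervalIntegrable (fun x => ((x : ℂ) ^ k • W x) p q) volume a b)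
    (c : ℕ → Matrix (Fin N) (Fin N) ℂ) (d k : ℕ) :
    mint a b (fun x => (x : ℂ) ^ k • ((∑ j ∈ range d, (x : ℂ) ^ j • c j) * W x)) =
      ∑ j ∈ range d, c j * mint a b (fun x => (x : ℂ) ^ (k + j) • W x) := by
  have expand : ∀ x : ℝ, (x : ℂ) ^ k • ((∑ j ∈ range d, (x : ℂ) ^ j • c j) * W x) =
      ∑ j ∈ range d, c j * ((x : ℂ) ^ (k + j) • W x) := fun x => by
    simp only [sum_mul, smul_sum, smul_mul_assoc, mul_smul_comm, smul_smul, pow_add]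
  rw [funext expand, mint_sum _ fun j _ => intervalIntegrable_mul_apply (hW _) _]
  exact sum_congr rfl fun j _ => mint_const_mul (hW _) _

end MatrixIntegral

section MomentAlgebra

variable {R : Type*} [Semiring R] [StarRing R] (A B : ℕ → ℤ → R) (μ : ℕ → R)

theorem sum_mul_star_eq_sum_mul_star_of_moments (hμ : ∀ k, star (μ k) = μ k)
    (hB : ∀ ν k : ℕ, B ν k = ∑ l ∈ range (ν + 1), A ν l * μ (k + l)) (ν k : ℕ) :
    ∑ l ∈ range (ν + 2), A (ν + 1) l * star (B ν ↑(l + k)) =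
      ∑ p ∈ range (ν + 1), B (ν + 1) ↑(p + k) * star (A ν p) := by
  simp only [hB, star_sum, star_mul, hμ, mul_sum, sum_mul, mul_assoc]
  rw [sum_comm]
  refine sum_congr rfl fun p _ => sum_congr rfl fun l _ => ?_
  rw [show l + k + p = p + k + l by ring]

theorem sum_coeff_mul_star_eq_sum_mul_star_coeff (hμ : ∀ k, star (μ k) = μ k)
    (hAhigh : ∀ (ν : ℕ) (j : ℤ), (ν : ℤ) < j → A ν j = 0)
    (hAlow : ∀ (ν : ℕ) (j : ℤ), j < 0 → A ν j = 0)
    (hB : ∀ ν k : ℕ, B ν k = ∑ l ∈ range (ν + 1), A ν l * μ (k + l))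
    (hBorth : ∀ ν k : ℕ, k < ν → B ν k = 0) (n : ℕ) (hn : 1 ≤ n) (m : ℕ) (hm : 1 ≤ m) :
    ∑ j ∈ range (m + 1), A n ((n : ℤ) - (m : ℤ) + (j : ℤ)) *
        star (B (n - 1) ((n : ℤ) + (j : ℤ) - 1)) =
      ∑ j ∈ range (m + 1), B n ((n : ℤ) + (m : ℤ) - (j : ℤ) - 1) *
        star (A (n - 1) ((n : ℤ) - (j : ℤ))) := by
  obtain ⟨ν, rfl⟩ : ∃ ν, n = ν + 1 := ⟨n - 1, by omega⟩
  obtain ⟨k, rfl⟩ : ∃ k, m = k + 1 := ⟨m - 1, by omega⟩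
  have hA_supp : ∀ ν l, A ν l ≠ 0 → 0 ≤ l ∧ l ≤ ν := fun ν l h => by
    by_contra h'
    exact h (if hl : l < 0 then hAlow ν l hl else hAhigh ν l (by omega))
  have hB_supp : ∀ ν (l : ℤ), 0 ≤ l → B ν l ≠ 0 → (ν : ℤ) ≤ l := fun ν l hl h => by
    by_contra h'
    exact h (by simpa [Int.toNat_of_nonneg hl] using hBorth ν l.toNat (by omega))
  set f : ℤ → R := fun l => A (ν + 1) l * star (B ν (l + k))
  set g : ℤ → R := fun p => B (ν + 1) (p + k) * star (A ν p)
  have hf : ∀ l, f l ≠ 0 → ν - k ≤ l ∧ l ≤ ν - k + ↑(k + 1) ∧ 0 ≤ l ∧ l < ↑(ν + 2) := by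
    intro l hl
    have hA := hA_supp _ _ (left_ne_zero_of_mul hl)
    have := hB_supp ν (l + k) (by omega) (star_ne_zero.1 (right_ne_zero_of_mul hl))
    push_cast at hA ⊢
    omega
  have hg : ∀ p, g p ≠ 0 → ν - k ≤ p ∧ p ≤ ν - k + ↑(k + 1) ∧ 0 ≤ p ∧ p < ↑(ν + 1) := by
    intro p hp
    have hA := hA_supp _ _ (star_ne_zero.1 (right_ne_zero_of_mul hp))
    have := hB_supp (ν + 1) (p + k) (by omega) (left_ne_zero_of_mul hp)
    push_cast at this ⊢
    omega
  calc _ = ∑ j ∈ range (k + 1 + 1), f (ν - k + j) :=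
        sum_congr rfl fun j _ => by simp only [f]; push_cast; ring_nf
    _ = ∑ l ∈ range (ν + 2), f l := sum_range_int_shift_eq_sum_range f _ _ _ hf
    _ = ∑ p ∈ range (ν + 1), g p := by
        simpa only [Nat.cast_add, f, g] using sum_mul_star_eq_sum_mul_star_of_moments A B μ hμ hB ν k
    _ = ∑ j ∈ range (k + 1 + 1), g (ν - k + ↑(k + 1 + 1 - 1 - j)) := by
        rw [sum_range_reflect (fun j => g (ν - k + j)), sum_range_int_shift_eq_sum_range g _ _ _ hg]
    _ = _ := sum_congr rfl fun j hj => by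
        rw [mem_range] at hj
        simp only [g]
        rw [Nat.cast_sub (by omega)]
        push_cast
        ring_nf

end MomentAlgebra

theorem stmt8_general
    (N : ℕ) (a b : ℝ) (hab : a < b)
    (W : ℝ → Matrix (Fin N) (Fin N) ℂ)
    (hWcont : ContinuousOn W (Set.Ioo a b))
    (hWpos : ∀ x ∈ Set.Ioo a b, (W x).PosDef)
    (hWmom : ∀ (n : ℕ) (i j : Fin N),
      IntegrableOn (fun x : ℝ => |x| ^ n * ‖W x i j‖) (Set.Ioo a b))
    (aC : ℕ → ℤ → Matrix (Fin N) (Fin N) ℂ)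
    (haHigh : ∀ (n : ℕ) (j : ℤ), (n : ℤ) < j → aC n j = 0)
    (haLow : ∀ (n : ℕ) (j : ℤ), j < 0 → aC n j = 0)
    (P : ℕ → ℂ → Matrix (Fin N) (Fin N) ℂ)
    (hP : ∀ (n : ℕ) (z : ℂ), P n z = ∑ j ∈ Finset.range (n + 1), z ^ j • aC n j)
    (horth : ∀ n j : ℕ, j < n →
      mint a b (fun x => ((x : ℂ) ^ j) • (P n (x : ℂ) * W x)) = 0)
    (bC : ℕ → ℤ → Matrix (Fin N) (Fin N) ℂ)
    (hb : ∀ (n k : ℕ), bC n (k : ℤ) = mint a b (fun x => ((x : ℂ) ^ k) • (P n (x : ℂ) * W x)))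
 :
    ∀ n : ℕ, 1 ≤ n → ∀ m : ℕ, 1 ≤ m →
      ∑ j ∈ Finset.range (m + 1), aC n ((n : ℤ) - (m : ℤ) + (j : ℤ)) *
          (bC (n - 1) ((n : ℤ) + (j : ℤ) - 1))ᴴ =
        ∑ j ∈ Finset.range (m + 1), bC n ((n : ℤ) + (m : ℤ) - (j : ℤ) - 1) *
          (aC (n - 1) ((n : ℤ) - (j : ℤ)))ᴴ := by
  set μ : ℕ → Matrix (Fin N) (Fin N) ℂ := fun k => mint a b (fun x => (x : ℂ) ^ k • W x)
  have hW := intervalIntegrable_pow_smul_apply hab.le hWcont hWmom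
  have hμ : ∀ k, star (μ k) = μ k := fun k =>
    isHermitian_mint hab.le fun x hx =>
      (hWpos x hx).isHermitian.smul (IsSelfAdjoint.pow (conj_ofReal x) k)
  have hbμ : ∀ ν k : ℕ, bC ν k = ∑ l ∈ range (ν + 1), aC ν l * μ (k + l) := fun ν k => by
    rw [hb]
    simp only [hP]
    exact mint_pow_smul_sum_mul hW _ _ _
  have hb_orth : ∀ ν k : ℕ, k < ν → bC ν k = 0 := fun ν k hk => (hb ν k).trans (horth ν k hk)
  simpa only [star_eq_conjTranspose] using
    sum_coeff_mul_star_eq_sum_mul_star_coeff aC bC μ hμ haHigh haLow hbμ hb_orth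

theorem stmt8
    (N : ℕ) (hN : 1 ≤ N) (a b : ℝ) (hab : a < b)
    (W : ℝ → Matrix (Fin N) (Fin N) ℂ)
    (hWcont : ContinuousOn W (Set.Ioo a b))
    (hWpos : ∀ x ∈ Set.Ioo a b, (W x).PosDef)
    (hWmom : ∀ (n : ℕ) (i j : Fin N),
      IntegrableOn (fun x : ℝ => |x| ^ n * ‖W x i j‖) (Set.Ioo a b))
    (hWnt : ∀ (d : ℕ) (c : Fin (d + 1) → Matrix (Fin N) (Fin N) ℂ), (∃ k, c k ≠ 0) →
      IsUnit (mint a b (fun x =>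
        (∑ k : Fin (d + 1), ((x : ℂ) ^ (k : ℕ)) • c k) * W x * (∑ k : Fin (d + 1), ((x : ℂ) ^ (k : ℕ)) • c k)ᴴ)))
    (aC : ℕ → ℤ → Matrix (Fin N) (Fin N) ℂ)
    (haDiag : ∀ n : ℕ, aC n n = 1)
    (haHigh : ∀ (n : ℕ) (j : ℤ), (n : ℤ) < j → aC n j = 0)
    (haLow : ∀ (n : ℕ) (j : ℤ), j < 0 → aC n j = 0)
    (P : ℕ → ℂ → Matrix (Fin N) (Fin N) ℂ)
    (hP : ∀ (n : ℕ) (z : ℂ), P n z = ∑ j ∈ Finset.range (n + 1), z ^ j • aC n j)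
    (horth : ∀ n j : ℕ, j < n →
      mint a b (fun x => ((x : ℂ) ^ j) • (P n (x : ℂ) * W x)) = 0)
    (bC : ℕ → ℤ → Matrix (Fin N) (Fin N) ℂ)
    (hb : ∀ (n k : ℕ), bC n (k : ℤ) = mint a b (fun x => ((x : ℂ) ^ k) • (P n (x : ℂ) * W x)))
    (hbLow : ∀ (n : ℕ) (k : ℤ), k < 0 → bC n k = 0)
 :
    ∀ n : ℕ, 1 ≤ n → ∀ m : ℕ, 1 ≤ m →
      ∑ j ∈ Finset.range (m + 1), aC n ((n : ℤ) - (m : ℤ) + (j : ℤ)) *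
          (bC (n - 1) ((n : ℤ) + (j : ℤ) - 1))ᴴ =
        ∑ j ∈ Finset.range (m + 1), bC n ((n : ℤ) + (m : ℤ) - (j : ℤ) - 1) *
          (aC (n - 1) ((n : ℤ) - (j : ℤ)))ᴴ :=
  stmt8_general N a b hab W hWcont hWpos hWmom aC haHigh haLow P hP horth bC hb
end
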